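/- arXiv:2006.02044 — 5 statements merged into one kernel-verified Lean document; each statement's English description precedes it below -/
import Mathlib

section
/- Let S be the regular δ-grid in ℝ^d (points of the form (k₁δ,...,k_dδ) with integer kᵢ) and let Ω be a convex body in ℝ^d containing a ball of radius r₀ ≥ 10 d^{3/2} δ. Then the number n of grid points of S contained in Ω satisfies (9/10)·vol(Ω)·δ^{-d} ≤ n ≤ (11/10)·vol(Ω)·δ^{-d}. -/
/-!
Tile space by the cubes of side `δ` centred at the grid points, i.e. by the fibres of
coordinatewise rounding to the grid; every point is within `√d δ / 2` of the centre of its cube.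
As `Ω` is convex and contains the ball of radius `r₀` about `x₀`, moving a point of the
homothetic copy `x₀ + (1 - ε) (Ω - x₀)` by at most `ε r₀` keeps it in `Ω`, and moving a point of
`Ω` by at most `ε r₀` keeps it in `x₀ + (1 + ε) (Ω - x₀)`. For `ε r₀ = √d δ / 2` the cubes
centred at the `n` grid points of `Ω` thus cover the first copy and lie in the second, so
`(1 - ε)^d vol Ω ≤ n δ^d ≤ (1 + ε)^d vol Ω`; the hypothesis on `r₀` makes `d ε ≤ 1 / 20`.
-/

open MeasureTheory Set Metric

section Homothety

variable {E : Type*} [NormedAddCommGroup E] [NormedSpace ℝ E] {Ω : Set E} {x₀ : E} {r ε : ℝ}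

theorem add_inv_smul_mem_of_closedBall_subset (hε : 0 < ε) (hball : closedBall x₀ r ⊆ Ω)
    {u : E} (hu : ‖u‖ ≤ ε * r) : x₀ + ε⁻¹ • u ∈ Ω := by
  apply hball
  rw [mem_closedBall, dist_eq_norm, add_sub_cancel_left, norm_smul, Real.norm_eq_abs,
    abs_of_pos (inv_pos.2 hε), inv_mul_le_iff₀ hε]
  exact hu

theorem Convex.add_mem_image_homothety_one_add (hconv : Convex ℝ Ω) (hε : 0 < ε)
    (hball : closedBall x₀ r ⊆ Ω) {x u : E} (hx : x ∈ Ω) (hu : ‖u‖ ≤ ε * r) :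
    x + u ∈ AffineMap.homothety x₀ (1 + ε) '' Ω := by
  have hw := add_inv_smul_mem_of_closedBall_subset hε hball hu
  refine ⟨(1 + ε)⁻¹ • x + (ε / (1 + ε)) • (x₀ + ε⁻¹ • u),
    hconv hx hw (by positivity) (by positivity) (by field_simp), ?_⟩
  rw [AffineMap.homothety_apply, vsub_eq_sub, vadd_eq_add]
  match_scalars <;> field_simp
  ring

theorem Convex.add_mem_of_mem_image_homothety_one_sub (hconv : Convex ℝ Ω) (hε : 0 < ε)
    (hε1 : ε ≤ 1) (hball : closedBall x₀ r ⊆ Ω) {y u : E}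
    (hy : y ∈ AffineMap.homothety x₀ (1 - ε) '' Ω) (hu : ‖u‖ ≤ ε * r) : y + u ∈ Ω := by
  obtain ⟨x, hx, rfl⟩ := hy
  have hw := add_inv_smul_mem_of_closedBall_subset hε hball hu
  have hcombo : (1 - ε) • x + ε • (x₀ + ε⁻¹ • u) ∈ Ω := hconv hx hw (by linarith) hε.le (by ring)
  convert hcombo using 1
  rw [AffineMap.homothety_apply, vsub_eq_sub, vadd_eq_add]
  match_scalars <;> field_simp
  ring

end Homothety

theorem EuclideanSpace.dist_le_sqrt_card_mul {ι : Type*} [Fintype ι]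
    {x y : EuclideanSpace ℝ ι} {c : ℝ} (hc : 0 ≤ c) (h : ∀ i, dist (x i) (y i) ≤ c) :
    dist x y ≤ √(Fintype.card ι) * c := by
  rw [EuclideanSpace.dist_eq, ← Real.sqrt_sq hc, ← Real.sqrt_mul (Nat.cast_nonneg _)]
  gcongr
  calc ∑ i, dist (x i) (y i) ^ 2 ≤ ∑ _i : ι, c ^ 2 := by gcongr with i; exact h i
    _ = Fintype.card ι * c ^ 2 := by simp

section Grid

variable {ι : Type*} {δ : ℝ}

def gridPoint (δ : ℝ) (k : ι → ℤ) : EuclideanSpace ℝ ι := WithLp.toLp 2 fun i => k i * δ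

noncomputable def gridRound (δ : ℝ) (x : EuclideanSpace ℝ ι) : ι → ℤ := fun i => round (x i / δ)

@[simp]
theorem gridPoint_apply (δ : ℝ) (k : ι → ℤ) (i : ι) : gridPoint δ k i = k i * δ := rfl

theorem gridRound_gridPoint (hδ : δ ≠ 0) (k : ι → ℤ) : gridRound δ (gridPoint δ k) = k := by
  funext i
  simp [gridRound, hδ]

theorem gridPoint_injective (hδ : δ ≠ 0) : Function.Injective (gridPoint (ι := ι) δ) :=
  Function.LeftInverse.injective (gridRound_gridPoint hδ)

theorem setOf_forall_eq_intCast_mul_eq_image_gridPoint (Ω : Set (EuclideanSpace ℝ ι)) :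
    {x ∈ Ω | ∀ i, ∃ k : ℤ, x i = k * δ} = gridPoint δ '' (gridPoint δ ⁻¹' Ω) := by
  ext x
  constructor
  · rintro ⟨hx, h⟩
    choose k hk using h
    obtain rfl : x = gridPoint δ k := by ext i; exact hk i
    exact ⟨k, hx, rfl⟩
  · rintro ⟨k, hk, rfl⟩
    exact ⟨hk, fun i => ⟨k i, rfl⟩⟩

theorem gridRound_preimage_singleton (hδ : 0 < δ) (k : ι → ℤ) :
    gridRound δ ⁻¹' {k} =
      WithLp.ofLp ⁻¹' univ.pi fun i => Ico ((k i - 1 / 2) * δ) ((k i + 1 / 2) * δ) := by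
  ext x
  simp [gridRound, funext_iff, round_eq_iff, le_div_iff₀ hδ, div_lt_iff₀ hδ]

variable [Fintype ι]

theorem finite_preimage_gridPoint (hδ : 0 < δ) {s : Set (EuclideanSpace ℝ ι)}
    (hs : Bornology.IsBounded s) : (gridPoint δ ⁻¹' s).Finite := by
  obtain ⟨R, hR⟩ := hs.subset_closedBall (0 : EuclideanSpace ℝ ι)
  refine (Set.Finite.pi fun _ => finite_Icc (-⌈R / δ⌉) ⌈R / δ⌉).subset fun k hk i _ => ?_
  have hki : |(k i : ℝ)| * δ ≤ R := by
    calc |(k i : ℝ)| * δ = ‖gridPoint δ k i‖ := by simp [abs_of_pos hδ]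
      _ ≤ ‖gridPoint δ k‖ := PiLp.norm_apply_le _ i
      _ ≤ R := mem_closedBall_zero_iff.1 (hR hk)
  have : |k i| ≤ ⌈R / δ⌉ := by
    exact_mod_cast ((le_div_iff₀ hδ).2 hki).trans (Int.le_ceil _)
  exact abs_le.1 this

theorem volume_gridRound_preimage_singleton (hδ : 0 < δ) (k : ι → ℤ) :
    volume (gridRound δ ⁻¹' {k}) = ENNReal.ofReal (δ ^ Fintype.card ι) := by
  rw [gridRound_preimage_singleton hδ, (PiLp.volume_preserving_ofLp ι).measure_preimage
    (MeasurableSet.univ_pi fun _ => measurableSet_Ico).nullMeasurableSet, volume_pi_pi]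
  have hside : ∀ a : ℝ, (a + 1 / 2) * δ - (a - 1 / 2) * δ = δ := fun a => by ring
  simp only [Real.volume_Ico, hside, Finset.prod_const, Finset.card_univ,
    ENNReal.ofReal_pow hδ.le]

theorem volume_gridRound_preimage (hδ : 0 < δ) (K : Finset (ι → ℤ)) :
    volume (gridRound δ ⁻¹' (K : Set (ι → ℤ))) =
      K.card * ENNReal.ofReal (δ ^ Fintype.card ι) := by
  rw [← biUnion_preimage_singleton, Finset.set_biUnion_coe,
    measure_biUnion_finset (pairwiseDisjoint_fiber _ _)]
  · simp [volume_gridRound_preimage_singleton hδ]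
  · intro k _
    rw [gridRound_preimage_singleton hδ]
    exact (MeasurableSet.univ_pi fun _ => measurableSet_Ico).preimage
      (PiLp.volume_preserving_ofLp ι).measurable

theorem dist_gridPoint_gridRound_le (hδ : 0 < δ) (x : EuclideanSpace ℝ ι) :
    dist (gridPoint δ (gridRound δ x)) x ≤ √(Fintype.card ι) * (δ / 2) := by
  refine EuclideanSpace.dist_le_sqrt_card_mul (by positivity) fun i => ?_
  have h := abs_sub_round (x i / δ)
  calc dist (gridPoint δ (gridRound δ x) i) (x i) = |x i / δ - round (x i / δ)| * δ := by
        rw [Real.dist_eq, ← abs_neg, ← abs_of_pos hδ, ← abs_mul, abs_of_pos hδ]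
        simp [gridRound, sub_mul, div_mul_cancel₀ _ hδ.ne']
    _ ≤ δ / 2 := by nlinarith

variable {Ω : Set (EuclideanSpace ℝ ι)} {x₀ : EuclideanSpace ℝ ι} {r ε : ℝ}

theorem image_homothety_one_sub_subset_gridRound_preimage (hδ : 0 < δ) (hconv : Convex ℝ Ω)
    (hball : closedBall x₀ r ⊆ Ω) (hε : 0 < ε) (hε1 : ε ≤ 1)
    (hεr : √(Fintype.card ι) * (δ / 2) ≤ ε * r) :
    AffineMap.homothety x₀ (1 - ε) '' Ω ⊆ gridRound δ ⁻¹' (gridPoint δ ⁻¹' Ω) := by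
  intro y hy
  have hdist : ‖gridPoint δ (gridRound δ y) - y‖ ≤ ε * r := by
    rw [← dist_eq_norm]
    exact (dist_gridPoint_gridRound_le hδ y).trans hεr
  simpa using hconv.add_mem_of_mem_image_homothety_one_sub hε hε1 hball hy hdist

theorem gridRound_preimage_subset_image_homothety_one_add (hδ : 0 < δ) (hconv : Convex ℝ Ω)
    (hball : closedBall x₀ r ⊆ Ω) (hε : 0 < ε) (hεr : √(Fintype.card ι) * (δ / 2) ≤ ε * r) :
    gridRound δ ⁻¹' (gridPoint δ ⁻¹' Ω) ⊆ AffineMap.homothety x₀ (1 + ε) '' Ω := by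
  intro x hx
  have hdist : ‖x - gridPoint δ (gridRound δ x)‖ ≤ ε * r := by
    rw [← dist_eq_norm, dist_comm]
    exact (dist_gridPoint_gridRound_le hδ x).trans hεr
  simpa using hconv.add_mem_image_homothety_one_add hε hball hx hdist

theorem volume_real_image_homothety {c : ℝ} (hc : 0 ≤ c) :
    volume.real (AffineMap.homothety x₀ c '' Ω) = c ^ Fintype.card ι * volume.real Ω := by
  simp [measureReal_def, finrank_euclideanSpace, abs_of_nonneg (pow_nonneg hc _),
    ENNReal.toReal_ofReal (pow_nonneg hc _)]

theorem volume_gridRound_preimage_gridPoint_preimage (hδ : 0 < δ)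
    (hΩ : Bornology.IsBounded Ω) :
    volume (gridRound δ ⁻¹' (gridPoint δ ⁻¹' Ω)) =
      ENNReal.ofReal ((gridPoint δ ⁻¹' Ω).ncard * δ ^ Fintype.card ι) := by
  have hK := finite_preimage_gridPoint hδ hΩ
  have hvol := volume_gridRound_preimage hδ hK.toFinset
  rw [hK.coe_toFinset] at hvol
  rw [hvol, ncard_eq_toFinset_card _ hK, ENNReal.ofReal_mul (Nat.cast_nonneg _),
    ENNReal.ofReal_natCast]

theorem one_sub_pow_mul_volume_real_le_ncard_mul (hδ : 0 < δ) (hconv : Convex ℝ Ω)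
    (hΩ : Bornology.IsBounded Ω) (hball : closedBall x₀ r ⊆ Ω) (hε : 0 < ε) (hε1 : ε ≤ 1)
    (hεr : √(Fintype.card ι) * (δ / 2) ≤ ε * r) :
    (1 - ε) ^ Fintype.card ι * volume.real Ω ≤
      (gridPoint δ ⁻¹' Ω).ncard * δ ^ Fintype.card ι := by
  have hcells := volume_gridRound_preimage_gridPoint_preimage hδ hΩ
  calc (1 - ε) ^ Fintype.card ι * volume.real Ω
      = volume.real (AffineMap.homothety x₀ (1 - ε) '' Ω) :=
        (volume_real_image_homothety (by linarith)).symm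
    _ ≤ volume.real (gridRound δ ⁻¹' (gridPoint δ ⁻¹' Ω)) :=
        measureReal_mono (image_homothety_one_sub_subset_gridRound_preimage hδ hconv hball hε
          hε1 hεr) (hcells ▸ ENNReal.ofReal_ne_top)
    _ = (gridPoint δ ⁻¹' Ω).ncard * δ ^ Fintype.card ι := by
        rw [measureReal_def, hcells, ENNReal.toReal_ofReal (by positivity)]

theorem ncard_mul_le_one_add_pow_mul_volume_real (hδ : 0 < δ) (hconv : Convex ℝ Ω)
    (hΩ : Bornology.IsBounded Ω) (hball : closedBall x₀ r ⊆ Ω) (hε : 0 < ε)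
    (hεr : √(Fintype.card ι) * (δ / 2) ≤ ε * r) :
    (gridPoint δ ⁻¹' Ω).ncard * δ ^ Fintype.card ι ≤
      (1 + ε) ^ Fintype.card ι * volume.real Ω := by
  have hcells := volume_gridRound_preimage_gridPoint_preimage hδ hΩ
  have hΩ' : volume (AffineMap.homothety x₀ (1 + ε) '' Ω) ≠ ⊤ := by
    rw [Measure.addHaar_image_homothety]
    exact ENNReal.mul_ne_top ENNReal.ofReal_ne_top hΩ.measure_lt_top.ne
  calc (gridPoint δ ⁻¹' Ω).ncard * δ ^ Fintype.card ι
      = volume.real (gridRound δ ⁻¹' (gridPoint δ ⁻¹' Ω)) := by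
        rw [measureReal_def, hcells, ENNReal.toReal_ofReal (by positivity)]
    _ ≤ volume.real (AffineMap.homothety x₀ (1 + ε) '' Ω) :=
        measureReal_mono (gridRound_preimage_subset_image_homothety_one_add hδ hconv hball hε
          hεr) hΩ'
    _ = (1 + ε) ^ Fintype.card ι * volume.real Ω := volume_real_image_homothety (by linarith)

end Grid

theorem nineteen_div_twenty_le_one_sub_pow {ε : ℝ} {n : ℕ} (hε1 : ε ≤ 1)
    (h : n * ε ≤ 1 / 20) : 19 / 20 ≤ (1 - ε) ^ n := by
  have := one_add_mul_le_pow (a := -ε) (by linarith) n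
  rw [← sub_eq_add_neg] at this
  linarith

theorem one_add_pow_le_twenty_div_nineteen {ε : ℝ} {n : ℕ} (hε0 : 0 ≤ ε) (hε1 : ε ≤ 1)
    (h : n * ε ≤ 1 / 20) : (1 + ε) ^ n ≤ 20 / 19 := by
  have hprod : (1 + ε) ^ n * (1 - ε) ^ n ≤ 1 := by
    rw [← mul_pow]
    exact pow_le_one₀ (by nlinarith) (by nlinarith)
  nlinarith [nineteen_div_twenty_le_one_sub_pow hε1 h, pow_nonneg (by linarith : 0 ≤ 1 + ε) n]

theorem grid_point_count_general (d : ℕ) (hd : 1 ≤ d) (δ r₀ : ℝ) (hδ : 0 < δ)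
    (hr : 10 * (d : ℝ) ^ ((3 : ℝ) / 2) * δ ≤ r₀)
    (Ω : Set (EuclideanSpace ℝ (Fin d)))
    (hconv : Convex ℝ Ω) (hcomp : IsCompact Ω)
    (x₀ : EuclideanSpace ℝ (Fin d)) (hball : Metric.closedBall x₀ r₀ ⊆ Ω) :
    (9 / 10) * (volume Ω).toReal * δ ^ (-(d : ℝ)) ≤
      ({x ∈ Ω | ∀ i, ∃ k : ℤ, x i = k * δ}.ncard : ℝ) ∧
    ({x ∈ Ω | ∀ i, ∃ k : ℤ, x i = k * δ}.ncard : ℝ) ≤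
      (11 / 10) * (volume Ω).toReal * δ ^ (-(d : ℝ)) := by
  have hd₀ : (0 : ℝ) < d := by exact_mod_cast hd
  have hr' : 10 * (d * √d) * δ ≤ r₀ := by
    rwa [show (3 : ℝ) / 2 = 1 + 1 / 2 by norm_num, Real.rpow_add hd₀, Real.rpow_one,
      ← Real.sqrt_eq_rpow] at hr
  have hr₀ : 0 < r₀ := lt_of_lt_of_le (by positivity) hr'
  set ε := √d * δ / (2 * r₀)
  have hε : 0 < ε := by positivity
  have hεr : √(Fintype.card (Fin d)) * (δ / 2) ≤ ε * r₀ :=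
    le_of_eq (by simp only [Fintype.card_fin, ε]; field_simp)
  have hεd : d * ε ≤ 1 / 20 := by
    rw [mul_div_assoc', div_le_div_iff₀ (by positivity) (by norm_num)]
    nlinarith
  have hε1 : ε ≤ 1 := by nlinarith [(by exact_mod_cast hd : (1 : ℝ) ≤ d)]
  have hlow := one_sub_pow_mul_volume_real_le_ncard_mul hδ hconv hcomp.isBounded hball hε hε1 hεr
  have hup := ncard_mul_le_one_add_pow_mul_volume_real hδ hconv hcomp.isBounded hball hε hεr
  simp only [Fintype.card_fin] at hlow hup
  have h19 := nineteen_div_twenty_le_one_sub_pow hε1 hεd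
  have h20 := one_add_pow_le_twenty_div_nineteen hε.le hε1 hεd
  have hV : 0 ≤ volume.real Ω := measureReal_nonneg
  rw [setOf_forall_eq_intCast_mul_eq_image_gridPoint, ncard_image_of_injective _
    (gridPoint_injective hδ.ne'), Real.rpow_neg hδ.le, Real.rpow_natCast, ← measureReal_def,
    ← div_eq_mul_inv, ← div_eq_mul_inv, div_le_iff₀ (by positivity), le_div_iff₀ (by positivity)]
  constructor <;> nlinarith

/-- Lemma (grid point count): if a convex body `Ω` in `ℝ^d` contains a ball of radius
`r₀ ≥ 10 d^{3/2} δ`, then the number of points of the regular `δ`-grid in `Ω` is between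
`(9/10)·vol(Ω)·δ^{-d}` and `(11/10)·vol(Ω)·δ^{-d}`. -/
theorem grid_point_count (d : ℕ) (hd : 1 ≤ d) (δ r₀ : ℝ) (hδ : 0 < δ)
    (hr : 10 * (d : ℝ) ^ ((3 : ℝ) / 2) * δ ≤ r₀)
    (Ω : Set (EuclideanSpace ℝ (Fin d)))
    (hconv : Convex ℝ Ω) (hcomp : IsCompact Ω) (hint : (interior Ω).Nonempty)
    (x₀ : EuclideanSpace ℝ (Fin d)) (hball : Metric.closedBall x₀ r₀ ⊆ Ω) :
    (9 / 10) * (volume Ω).toReal * δ ^ (-(d : ℝ)) ≤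
      ({x ∈ Ω | ∀ i, ∃ k : ℤ, x i = k * δ}.ncard : ℝ) ∧
    ({x ∈ Ω | ∀ i, ∃ k : ℤ, x i = k * δ}.ncard : ℝ) ≤
      (11 / 10) * (volume Ω).toReal * δ ^ (-(d : ℝ)) :=
  grid_point_count_general d hd δ r₀ hδ hr Ω hconv hcomp x₀ hball
end

section
/- Let A and B be convex bodies in ℝ^d and let C ⊇ A and D ⊇ B be convex bodies. Then vol((A+B) \ B) ≤ vol((C+D) \ D), where A+B denotes the Minkowski sum. -/
/-!
Let `P` be the nearest-point map onto `B` and `u x = x - P x`. Given a finite set `S` of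
translations, move each `x ∈ D \ B` by a `v ∈ S` maximising `⟪u x, v⟫` (ties broken along an
enumeration of `S`). The obtuse-angle inequality for `P` shows that `v + x ∉ S + B`, and firm
nonexpansiveness of `u` shows that the translated pieces are disjoint, so
`vol (D \ B) ≤ vol ((S + D) \ (S + B))`. Decomposing `(S + D) \ B` in two ways (with `0 ∈ S`)
and cancelling the finite `vol (D \ B)` gives `vol ((S + B) \ B) ≤ vol ((S + D) \ D)`.
Finally, up to its null frontier, `(A + B) \ B` is the open set `(A + interior B) \ B`, and each
compact subset of it lies in `(F + B) \ B` for a finite `F ⊆ A ⊆ C`.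
-/

open MeasureTheory Pointwise Set Function
open scoped RealInnerProductSpace ENNReal

section NearestPoint

variable {E : Type*} [NormedAddCommGroup E] [InnerProductSpace ℝ E]

/-- For convex `B` this characterises `P x` as the point of `B` nearest to `x`. -/
def IsNearestPointMap (B : Set E) (P : E → E) : Prop :=
  ∀ x, P x ∈ B ∧ ∀ w ∈ B, ⟪x - P x, w - P x⟫ ≤ 0

theorem exists_isNearestPointMap {B : Set E} (hB : Convex ℝ B) (hBc : IsComplete B)
    (hBne : B.Nonempty) : ∃ P, IsNearestPointMap B P := by
  choose P hPB hP using exists_norm_eq_iInf_of_complete_convex hBne hBc hB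
  exact ⟨P, fun x => ⟨hPB x, (norm_eq_iInf_iff_real_inner_le_zero hB (hPB x)).1 (hP x)⟩⟩

namespace IsNearestPointMap

variable {B : Set E} {P : E → E}

theorem norm_sub_sub_sq_le_inner (hP : IsNearestPointMap B P) (x y : E) :
    ‖(x - P x) - (y - P y)‖ ^ 2 ≤ ⟪(x - P x) - (y - P y), x - y⟫ := by
  have hx := (hP x).2 (P y) (hP y).1
  have hy := (hP y).2 (P x) (hP x).1
  have h : ⟪(x - P x) - (y - P y), x - y⟫ = ‖(x - P x) - (y - P y)‖ ^ 2
      - ⟪x - P x, P y - P x⟫ - ⟪y - P y, P x - P y⟫ := by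
    rw [← real_inner_self_eq_norm_sq]
    simp only [inner_sub_left, inner_sub_right, real_inner_comm]
    ring
  linarith

theorem lipschitzWith_sub (hP : IsNearestPointMap B P) : LipschitzWith 1 fun x => x - P x := by
  refine LipschitzWith.of_dist_le_mul fun x y => ?_
  rw [NNReal.coe_one, one_mul, dist_eq_norm, dist_eq_norm]
  have h := (hP.norm_sub_sub_sq_le_inner x y).trans (real_inner_le_norm _ _)
  nlinarith [norm_nonneg (x - y), norm_nonneg ((x - P x) - (y - P y))]

theorem add_notMem_add (hP : IsNearestPointMap B P) {S : Set E} {x v : E} (hx : x ∉ B)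
    (hv : ∀ w ∈ S, ⟪x - P x, w⟫ ≤ ⟪x - P x, v⟫) : v + x ∉ S + B := by
  rintro ⟨w, hw, b, hb, hwb⟩
  have hu : x - P x ≠ 0 := fun h => hx (sub_eq_zero.1 h ▸ (hP x).1)
  have hb' : b - P x = (x - P x) + (v - w) := by
    rw [eq_sub_of_add_eq' hwb]; abel
  have hvar := (hP x).2 b hb
  rw [hb', inner_add_right, inner_sub_right _ v w] at hvar
  linarith [hv w hw, real_inner_self_pos.2 hu]

theorem sub_eq_of_add_eq (hP : IsNearestPointMap B P) {x y v w : E}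
    (hx : ⟪x - P x, w⟫ ≤ ⟪x - P x, v⟫) (hy : ⟪y - P y, v⟫ ≤ ⟪y - P y, w⟫) (h : v + x = w + y) :
    x - P x = y - P y := by
  have hxy : x - y = w - v := by linear_combination (norm := module) h
  have key := hP.norm_sub_sub_sq_le_inner x y
  rw [hxy, inner_sub_left, inner_sub_right, inner_sub_right] at key
  have : ‖(x - P x) - (y - P y)‖ ^ 2 ≤ 0 := by linarith
  simpa [sub_eq_zero] using this

end IsNearestPointMap

end NearestPoint

theorem measure_le_of_pairwise_disjoint_vadd {G : Type*} [AddGroup G] [MeasurableSpace G]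
    [MeasurableAdd G] {μ : Measure G} [μ.IsAddLeftInvariant] {ι : Type*} [Countable ι]
    {s t : Set G} {p : ι → Set G} {v : ι → G} (hp : ∀ i, MeasurableSet (p i))
    (hs : s ⊆ ⋃ i, p i) (hdisj : Pairwise (Disjoint on fun i => v i +ᵥ p i))
    (ht : ∀ i, v i +ᵥ p i ⊆ t) : μ s ≤ μ t :=
  calc μ s ≤ μ (⋃ i, p i) := measure_mono hs
    _ ≤ ∑' i, μ (p i) := measure_iUnion_le _
    _ = ∑' i, μ (v i +ᵥ p i) := by simp only [measure_vadd]
    _ = μ (⋃ i, v i +ᵥ p i) := (measure_iUnion hdisj fun i => (hp i).const_vadd _).symm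
    _ ≤ μ t := measure_mono (iUnion_subset ht)

theorem interior_add_subset_add_interior {E : Type*} [AddCommGroup E] [Module ℝ E]
    [TopologicalSpace E] [IsTopologicalAddGroup E] [ContinuousSMul ℝ E] {A B : Set E}
    (hA : Convex ℝ A) (hB : Convex ℝ B) (hBi : (interior B).Nonempty) :
    interior (A + B) ⊆ A + interior B := by
  rcases A.eq_empty_or_nonempty with rfl | hAne
  · simp
  have hopen : IsOpen (A + interior B) := isOpen_interior.add_left
  have hdense : A + B ⊆ closure (A + interior B) :=
    calc A + B ⊆ A + closure (interior B) := add_subset_add_left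
          (hB.closure_interior_eq_closure_of_nonempty_interior hBi ▸ subset_closure)
      _ ⊆ closure (A + interior B) := set_vadd_closure_subset A (interior B)
  calc interior (A + B) ⊆ interior (closure (A + interior B)) := interior_mono hdense
    _ = A + interior B := by
      rw [(hA.add hB.interior).interior_closure_eq_interior_of_nonempty_interior
        (by rw [hopen.interior_eq]; exact hAne.add hBi), hopen.interior_eq]

theorem IsCompact.exists_finite_subset_add {G : Type*} [AddGroup G] [TopologicalSpace G]
    [IsTopologicalAddGroup G] {K A U : Set G} (hK : IsCompact K) (hU : IsOpen U)
    (hKAU : K ⊆ A + U) : ∃ F ⊆ A, F.Finite ∧ K ⊆ F + U := by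
  rw [← iUnion_add_left_image] at hKAU
  obtain ⟨F, hFA, hF, hKF⟩ :=
    hK.elim_finite_subcover_image (fun a _ => isOpenMap_add_left a U hU) hKAU
  exact ⟨F, hFA, hF, by rwa [← iUnion_add_left_image]⟩

section Translates

variable {E : Type*} [NormedAddCommGroup E] [InnerProductSpace ℝ E] [MeasurableSpace E]
  [BorelSpace E] (μ : Measure E) [μ.IsAddLeftInvariant]

theorem measure_diff_le_measure_add_diff_add {B D S : Set E} (hB : Convex ℝ B)
    (hBc : IsComplete B) (hBne : B.Nonempty) (hD : MeasurableSet D) (hS : S.Finite)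
    (hSne : S.Nonempty) : μ (D \ B) ≤ μ ((S + D) \ (S + B)) := by
  obtain ⟨P, hP⟩ := exists_isNearestPointMap hB hBc hBne
  obtain ⟨n, v, -, rfl⟩ := hS.fin_param
  have : Nonempty (Fin n) := range_nonempty_iff_nonempty.1 hSne
  set M : Fin n → Set E := fun i => (D \ B) ∩ {x | ∀ j, ⟪x - P x, v j⟫ ≤ ⟪x - P x, v i⟫}
  have hM : ∀ i, MeasurableSet (M i) := by
    intro i
    have hu := hP.lipschitzWith_sub.continuous
    refine (hD.diff hBc.isClosed.measurableSet).inter ?_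
    simp only [ofPred_forall]
    exact MeasurableSet.iInter fun j => measurableSet_le
      (hu.inner continuous_const).measurable (hu.inner continuous_const).measurable
  refine measure_le_of_pairwise_disjoint_vadd (p := disjointed M) (v := v)
    (fun i => disjointedRec (fun _ j ht => ht.diff (hM j)) (hM i)) ?_ ?_ ?_
  · rw [iUnion_disjointed]
    intro x hx
    obtain ⟨i, hi⟩ := Finite.exists_max fun j => ⟪x - P x, v j⟫
    exact mem_iUnion.2 ⟨i, hx, hi⟩
  · intro i j hij
    rw [onFun, disjoint_left]
    rintro _ ⟨x, hx, rfl⟩ ⟨y, hy, hxy⟩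
    have hxi := disjointed_subset M i hx
    have hyj := disjointed_subset M j hy
    have huxy := hP.sub_eq_of_add_eq (hxi.2 j) (hyj.2 i) hxy.symm
    have hyi : y ∈ M i := ⟨hyj.1, fun k => by rw [← huxy]; exact hxi.2 k⟩
    have hxj : x ∈ M j := ⟨hxi.1, fun k => by rw [huxy]; exact hyj.2 k⟩
    have hlt : ∀ {a b}, a < b → Disjoint (M a) (disjointed M b) := fun h =>
      disjoint_sdiff_self_right.mono_left (Finset.le_sup (Finset.mem_Iio.2 h))
    rcases hij.lt_or_gt with h | h
    · exact disjoint_left.1 (hlt h) hyi hy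
    · exact disjoint_left.1 (hlt h) hxj hx
  · rintro i _ ⟨x, hx, rfl⟩
    replace hx := disjointed_subset M i hx
    exact ⟨add_mem_add (mem_range_self i) hx.1.1,
      hP.add_notMem_add hx.1.2 (forall_mem_range.2 hx.2)⟩

theorem measure_add_diff_le_measure_add_diff {B D S : Set E} (hB : Convex ℝ B)
    (hBc : IsComplete B) (hBne : B.Nonempty) (hD : MeasurableSet D) (hμD : μ D ≠ ∞)
    (hBD : B ⊆ D) (hS : S.Finite) : μ ((S + B) \ B) ≤ μ ((S + D) \ D) := by
  set T := insert 0 S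
  have hT : T.Finite := hS.insert 0
  have hBT : B ⊆ T + B := fun b hb => ⟨0, mem_insert 0 S, b, hb, zero_add b⟩
  have hDT : D ⊆ T + D := fun x hx => ⟨0, mem_insert 0 S, x, hx, zero_add x⟩
  have hTB : MeasurableSet (T + B) :=
    (hBc.isClosed.add_left_of_isCompact hT.isCompact).measurableSet
  have hDB : μ (D \ B) ≠ ∞ := ((measure_mono sdiff_subset).trans_lt hμD.lt_top).ne
  have key : μ ((T + B) \ B) ≤ μ ((T + D) \ D) := by
    refine ENNReal.le_of_add_le_add_right hDB ?_
    calc μ ((T + B) \ B) + μ (D \ B)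
        ≤ μ ((T + B) \ B) + μ ((T + D) \ (T + B)) := add_le_add le_rfl
          (measure_diff_le_measure_add_diff_add μ hB hBc hBne hD hT (insert_nonempty 0 S))
      _ = μ ((T + D) \ B) := by
          rw [← sdiff_union_sdiff_cancel (add_subset_add_left hBD) hBT, add_comm,
            measure_union (disjoint_sdiff_left.mono_right sdiff_subset)
              (hTB.diff hBc.isClosed.measurableSet)]
      _ ≤ μ ((T + D) \ D) + μ (D \ B) := by
          rw [← sdiff_union_sdiff_cancel hDT hBD]
          exact measure_union_le _ _
  have hTX : ∀ X : Set E, (T + X) \ X = (S + X) \ X := fun X => by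
    rw [show T = {0} ∪ S from insert_eq 0 S, union_add, singleton_zero, zero_add, union_sdiff_left]
  rwa [hTX, hTX] at key

end Translates

theorem vol_minkowski_diff_mono_general (d : ℕ)
    (A B C D : Set (EuclideanSpace ℝ (Fin d)))
    (hA : Convex ℝ A)
    (hB : Convex ℝ B) (hBc : IsCompact B) (hBi : (interior B).Nonempty)
    (hDc : IsCompact D)
    (hAC : A ⊆ C) (hBD : B ⊆ D) :
    volume ((A + B) \ B) ≤ volume ((C + D) \ D) := by
  have hAB : interior (A + B) =ᵐ[volume] A + B :=
    interior_ae_eq_of_null_frontier ((hA.add hB).addHaar_frontier volume)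
  have hopen : IsOpen ((A + interior B) \ B) := isOpen_interior.add_left.sdiff hBc.isClosed
  calc volume ((A + B) \ B) = volume (interior (A + B) \ B) :=
        measure_congr (hAB.symm.diff Filter.EventuallyEq.rfl)
    _ ≤ volume ((A + interior B) \ B) :=
        measure_mono (sdiff_subset_sdiff_left (interior_add_subset_add_interior hA hB hBi))
    _ ≤ volume ((C + D) \ D) := by
        rw [hopen.measure_eq_iSup_isCompact]
        refine iSup₂_le fun K hK => iSup_le fun hKc => ?_
        obtain ⟨F, hFA, hF, hKF⟩ :=
          hKc.exists_finite_subset_add isOpen_interior (hK.trans sdiff_subset)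
        calc volume K ≤ volume ((F + B) \ B) :=
              measure_mono fun x hx => ⟨add_subset_add_left interior_subset (hKF hx), (hK hx).2⟩
          _ ≤ volume ((F + D) \ D) := measure_add_diff_le_measure_add_diff volume hB
              hBc.isComplete (hBi.mono interior_subset) hDc.measurableSet hDc.measure_ne_top hBD hF
          _ ≤ volume ((C + D) \ D) :=
              measure_mono (sdiff_subset_sdiff_left (add_subset_add_right (hFA.trans hAC)))

/-- Monotonicity of the volume of the Minkowski-sum difference body: for convex bodies
`A ⊆ C` and `B ⊆ D` in `ℝ^d`, `vol((A+B) \ B) ≤ vol((C+D) \ D)`. -/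
theorem vol_minkowski_diff_mono (d : ℕ)
    (A B C D : Set (EuclideanSpace ℝ (Fin d)))
    (hA : Convex ℝ A) (hAc : IsCompact A) (hAi : (interior A).Nonempty)
    (hB : Convex ℝ B) (hBc : IsCompact B) (hBi : (interior B).Nonempty)
    (hC : Convex ℝ C) (hCc : IsCompact C) (hCi : (interior C).Nonempty)
    (hD : Convex ℝ D) (hDc : IsCompact D) (hDi : (interior D).Nonempty)
    (hAC : A ⊆ C) (hBD : B ⊆ D) :
    volume ((A + B) \ B) ≤ volume ((C + D) \ D) :=
  vol_minkowski_diff_mono_general d A B C D hA hB hBc hBi hDc hAC hBD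
end

section
/- (Varshamov–Gilbert) For every n ≥ 1 there exists a subset W of {0,1}^n with |W| ≥ exp(n/8) such that the Hamming distance between any two distinct elements of W is at least n/4. -/
open Finset Real

/-- Sum over all finsets of a power of the cardinality. -/
lemma vg_sum_pow_card (n : ℕ) (r : ℝ) :
    ∑ s : Finset (Fin n), r ^ s.card = (r + 1) ^ n := by
  have h := Finset.prod_add (fun _ : Fin n => r) (fun _ : Fin n => 1) Finset.univ
  simp only [Finset.prod_const, Finset.prod_const_one, one_pow, mul_one, Finset.card_univ,
    Fintype.card_fin, Finset.powerset_univ] at h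
  rw [← h]

/-- The key numeric inequality. -/
lemma vg_base : Real.exp (1/8) * (3:ℝ) ^ ((1:ℝ)/4) * (4/3) ≤ 2 := by
  have h3 : ((3:ℝ) ^ ((1:ℝ)/4)) ^ (4:ℕ) = 3 := by
    rw [← Real.rpow_natCast ((3:ℝ) ^ ((1:ℝ)/4)) 4, ← Real.rpow_mul (by norm_num : (0:ℝ) ≤ 3)]
    norm_num
  have he : Real.exp (1/8) ^ (4:ℕ) = Real.exp (1/2) := by
    rw [← Real.exp_nat_mul]; norm_num
  have he2 : Real.exp (1/2) ^ (2:ℕ) = Real.exp 1 := by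
    rw [← Real.exp_nat_mul]; norm_num
  have hlt : Real.exp 1 < 2.7182818286 := Real.exp_one_lt_d9
  have hhalf : Real.exp (1/2) ≤ 27/16 := by
    nlinarith [Real.exp_pos (1/2), he2]
  have h4 : (Real.exp (1/8) * (3:ℝ) ^ ((1:ℝ)/4) * (4/3)) ^ (4:ℕ) ≤ 2 ^ (4:ℕ) := by
    rw [mul_pow, mul_pow, h3, he]
    nlinarith [Real.exp_pos (1/2)]
  exact le_of_pow_le_pow_left₀ (by norm_num) (by norm_num) h4

/-- Varshamov–Gilbert lemma: for every `n ≥ 1` there is a subset `W ⊆ {0,1}^n` with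
`|W| ≥ exp(n/8)` whose distinct elements are at Hamming distance at least `n/4`. -/
theorem varshamov_gilbert (n : ℕ) (hn : 1 ≤ n) :
    ∃ W : Finset (Fin n → Bool),
      Real.exp (n / 8) ≤ (W.card : ℝ) ∧
      ∀ ξ ∈ W, ∀ ξ' ∈ W, ξ ≠ ξ' → (n : ℝ) / 4 ≤ (hammingDist ξ ξ' : ℝ) := by
  classical
  set P : Finset (Fin n → Bool) → Prop :=
    fun W => ∀ ξ ∈ W, ∀ ξ' ∈ W, ξ ≠ ξ' → n ≤ 4 * hammingDist ξ ξ' with hP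
  -- a maximal good set
  obtain ⟨W, hWP, hWmax⟩ : ∃ W, P W ∧ ∀ V, P V → V.card ≤ W.card := by
    obtain ⟨W, hW, hmax⟩ := Finset.exists_max_image (Finset.univ.filter P) Finset.card
      ⟨∅, by simp [hP]⟩
    exact ⟨W, (Finset.mem_filter.mp hW).2, fun V hV => hmax V (Finset.mem_filter.mpr ⟨Finset.mem_univ V, hV⟩)⟩
  refine ⟨W, ?_, ?_⟩
  swap
  · intro ξ hξ ξ' hξ' hne
    have := hWP ξ hξ ξ' hξ' hne
    have : (n:ℝ) ≤ 4 * (hammingDist ξ ξ' : ℝ) := by exact_mod_cast this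
    linarith
  -- covering property
  have hcov : ∀ x : Fin n → Bool, ∃ w ∈ W, 4 * hammingDist x w < n := by
    intro x
    by_contra hc
    push_neg at hc
    have hxW : x ∉ W := by
      intro hx
      have := hc x hx
      simp [hammingDist_self] at this
      omega
    have hins : P (insert x W) := by
      intro ξ hξ ξ' hξ' hne
      rcases Finset.mem_insert.mp hξ with rfl | hξW
      · rcases Finset.mem_insert.mp hξ' with rfl | h'
        · exact absurd rfl hne
        · exact hc ξ' h'
      · rcases Finset.mem_insert.mp hξ' with rfl | h'
        · rw [hammingDist_comm]; exact hc ξ hξW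
        · exact hWP ξ hξW ξ' h' hne
    have := hWmax _ hins
    rw [Finset.card_insert_of_notMem hxW] at this
    omega
  -- counting: card of each ball
  set F : ℕ := (Finset.univ.filter fun s : Finset (Fin n) => 4 * s.card < n).card with hF
  have hball : ∀ w : Fin n → Bool,
      (Finset.univ.filter fun x : Fin n → Bool => 4 * hammingDist x w < n).card = F := by
    intro w
    refine Finset.card_bij (fun x _ => Finset.univ.filter fun i => x i ≠ w i) ?_ ?_ ?_
    · intro x hx
      simp only [Finset.mem_filter, Finset.mem_univ, true_and] at hx ⊢
      exact hx
    · intro x hx y hy hxy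
      funext i
      have : (x i ≠ w i) ↔ (y i ≠ w i) := by
        constructor <;> intro h <;>
          [have := (Finset.ext_iff.mp hxy i).mp (by simpa using h);
           have := (Finset.ext_iff.mp hxy i).mpr (by simpa using h)] <;>
          simpa using this
      revert this
      cases hx' : x i <;> cases hy' : y i <;> cases hw : w i <;> simp
    · intro s hs
      simp only [Finset.mem_filter, Finset.mem_univ, true_and] at hs
      refine ⟨fun i => if i ∈ s then !(w i) else w i, ?_, ?_⟩
      · simp only [Finset.mem_filter, Finset.mem_univ, true_and]
        have hfs : (Finset.univ.filter fun i =>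
            (fun j => if j ∈ s then !(w j) else w j) i ≠ w i) = s := by
          ext i
          by_cases h : i ∈ s <;> simp [h]
        have hd : hammingDist (fun j => if j ∈ s then !(w j) else w j) w = s.card := by
          have : hammingDist (fun j => if j ∈ s then !(w j) else w j) w
              = (Finset.univ.filter fun i =>
                (fun j => if j ∈ s then !(w j) else w j) i ≠ w i).card := rfl
          rw [this, hfs]
        rw [hd]; exact hs
      · ext i
        by_cases h : i ∈ s <;> simp [h]
  -- 2^n ≤ W.card * F
  have hcount : 2 ^ n ≤ W.card * F := by
    have hsub : (Finset.univ : Finset (Fin n → Bool)) ⊆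
        W.biUnion (fun w => Finset.univ.filter fun x => 4 * hammingDist x w < n) := by
      intro x _
      obtain ⟨w, hw, hd⟩ := hcov x
      exact Finset.mem_biUnion.mpr ⟨w, hw, by simp [hd]⟩
    calc 2 ^ n = (Finset.univ : Finset (Fin n → Bool)).card := by
              simp [Finset.card_univ]
      _ ≤ (W.biUnion (fun w => Finset.univ.filter
              fun x => 4 * hammingDist x w < n)).card := Finset.card_le_card hsub
      _ ≤ ∑ w ∈ W, (Finset.univ.filter fun x => 4 * hammingDist x w < n).card :=
            Finset.card_biUnion_le
      _ = W.card * F := by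
            rw [Finset.sum_congr rfl fun w _ => hball w, Finset.sum_const, smul_eq_mul]
  -- bound F
  set M : ℝ := (3:ℝ) ^ ((n:ℝ)/4) * (4/3) ^ n with hM
  have hMpos : 0 < M := by positivity
  have hFM : (F : ℝ) ≤ M := by
    have h1 : (F : ℝ) = ∑ s ∈ (Finset.univ.filter
        fun s : Finset (Fin n) => 4 * s.card < n), (1:ℝ) := by simp [hF]
    have h2 : ∀ s : Finset (Fin n), 4 * s.card < n →
        (1:ℝ) ≤ (3:ℝ) ^ ((n:ℝ)/4) * (1/3) ^ s.card := by
      intro s hs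
      have hc : ((s.card : ℝ)) ≤ (n:ℝ)/4 := by
        have : (4 * s.card : ℝ) ≤ n := by exact_mod_cast hs.le
        linarith
      have h3 : (3:ℝ) ^ (s.card : ℕ) ≤ (3:ℝ) ^ ((n:ℝ)/4) := by
        rw [← Real.rpow_natCast 3 s.card]
        exact Real.rpow_le_rpow_of_exponent_le (by norm_num) hc
      rw [one_div, inv_pow, ← div_eq_mul_inv, le_div_iff₀ (by positivity)]
      simpa using h3
    calc (F : ℝ) = ∑ s ∈ (Finset.univ.filter
            fun s : Finset (Fin n) => 4 * s.card < n), (1:ℝ) := h1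
      _ ≤ ∑ s ∈ (Finset.univ.filter fun s : Finset (Fin n) => 4 * s.card < n),
            (3:ℝ) ^ ((n:ℝ)/4) * (1/3) ^ s.card := by
            refine Finset.sum_le_sum fun s hs => ?_
            exact h2 s (by simpa using (Finset.mem_filter.mp hs).2)
      _ ≤ ∑ s : Finset (Fin n), (3:ℝ) ^ ((n:ℝ)/4) * (1/3) ^ s.card := by
            refine Finset.sum_le_sum_of_subset_of_nonneg (Finset.filter_subset _ _)
              fun s _ _ => by positivity
      _ = (3:ℝ) ^ ((n:ℝ)/4) * ∑ s : Finset (Fin n), (1/3:ℝ) ^ s.card := by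
            rw [Finset.mul_sum]
      _ = M := by rw [vg_sum_pow_card]; norm_num [hM]
  -- key inequality : exp(n/8) * M ≤ 2^n
  have hkey : Real.exp ((n:ℝ)/8) * M ≤ (2:ℝ) ^ n := by
    have e1 : Real.exp ((n:ℝ)/8) = Real.exp (1/8) ^ n := by
      rw [← Real.exp_nat_mul]; ring_nf
    have e2 : (3:ℝ) ^ ((n:ℝ)/4) = ((3:ℝ) ^ ((1:ℝ)/4)) ^ n := by
      rw [← Real.rpow_natCast ((3:ℝ) ^ ((1:ℝ)/4)) n, ← Real.rpow_mul (by norm_num : (0:ℝ) ≤ 3)]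
      ring_nf
    rw [hM, e1, e2, ← mul_pow, ← mul_pow, ← mul_assoc]
    exact pow_le_pow_left₀ (by positivity) vg_base n
  -- conclude
  have hcountR : (2:ℝ) ^ n ≤ (W.card : ℝ) * F := by exact_mod_cast hcount
  have : Real.exp ((n:ℝ)/8) * M ≤ (W.card : ℝ) * M := by
    calc Real.exp ((n:ℝ)/8) * M ≤ (2:ℝ) ^ n := hkey
      _ ≤ (W.card : ℝ) * F := hcountR
      _ ≤ (W.card : ℝ) * M := by
          exact mul_le_mul_of_nonneg_left hFM (by positivity)
  exact le_of_mul_le_mul_right this hMpos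
end

section
/- Let Ω be a convex body in ℝ^d whose John ellipsoid has center c, and for λ ∈ (0,1) let Ω_λ = c + λ(Ω - c). Let P be a point on the boundary of Ω_{0.95}, and let H be any hyperplane through P, cutting Ω into two parts. Then the part L not containing c in its interior satisfies vol(L) ≥ (1/(2d))·(20d)^{-d}·vol(Ω). -/
open MeasureTheory
open scoped RealInnerProductSpace ENNReal Pointwise

/-- Lemma (cut volume at the dilated body): let `Ω` be a convex body whose John ellipsoid has
center `c` (encoded via an affine equivalence `T` mapping `c` to `0` with
`B(0,1) ⊆ T(Ω) ⊆ B(0,d)`, as given by John's theorem). If `P` lies on the boundary of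
`Ω_{0.95} = c + 0.95(Ω - c)` and a hyperplane through `P` with normal `v` cuts `Ω`, then the
part on the side not containing `c` has volume at least `(1/(2d))·(20d)^{-d}·vol(Ω)`. -/
theorem cut_volume_lower_bound (d : ℕ) (hd : 1 ≤ d)
    (Ω : Set (EuclideanSpace ℝ (Fin d)))
    (hconv : Convex ℝ Ω) (hcomp : IsCompact Ω) (hint : (interior Ω).Nonempty)
    (c : EuclideanSpace ℝ (Fin d))
    (T : EuclideanSpace ℝ (Fin d) ≃ᵃ[ℝ] EuclideanSpace ℝ (Fin d))
    (hTc : T c = 0)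
    (hT1 : Metric.closedBall 0 1 ⊆ T '' Ω)
    (hT2 : T '' Ω ⊆ Metric.closedBall 0 (d : ℝ))
    (P : EuclideanSpace ℝ (Fin d))
    (hP : P ∈ frontier ((fun x => c + (0.95 : ℝ) • (x - c)) '' Ω))
    (v : EuclideanSpace ℝ (Fin d)) (hv : v ≠ 0)
    (hside : ⟪v, c - P⟫ ≤ 0) :
    1 / (2 * d) * (20 * (d : ℝ)) ^ (-(d : ℝ)) * (volume Ω).toReal ≤
      (volume {x ∈ Ω | 0 ≤ ⟪v, x - P⟫}).toReal := by
  classical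
  have hd0 : (0:ℝ) < d := by exact_mod_cast hd
  -- P is in the dilated body (which is compact, hence closed)
  have himg : IsCompact ((fun x => c + (0.95 : ℝ) • (x - c)) '' Ω) := by
    apply hcomp.image
    fun_prop
  have hPmem : P ∈ (fun x => c + (0.95 : ℝ) • (x - c)) '' Ω := by
    have h1 := frontier_subset_closure hP
    rwa [himg.isClosed.closure_eq] at h1
  obtain ⟨x₀, hx₀, hPx⟩ := hPmem
  simp only at hPx
  -- the linear part of T
  set L : EuclideanSpace ℝ (Fin d) ≃ₗ[ℝ] EuclideanSpace ℝ (Fin d) := T.linear with hL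
  have hT_add : ∀ w : EuclideanSpace ℝ (Fin d), T (w + c) = L w := by
    intro w
    have h := T.map_vadd c w
    simp only [vadd_eq_add] at h
    rw [h, hTc, add_zero]
  -- the symmetric ellipsoid S
  set S : Set (EuclideanSpace ℝ (Fin d)) :=
    (L.symm : EuclideanSpace ℝ (Fin d) →ₗ[ℝ] EuclideanSpace ℝ (Fin d)) '' Metric.closedBall 0 1
    with hSdef
  have hS_sub : ∀ s ∈ S, c + s ∈ Ω := by
    rintro s ⟨u, hu, rfl⟩
    obtain ⟨z, hz, hzu⟩ := hT1 hu
    have hLz : L.symm u = z - c := by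
      have : L (z - c) = u := by rw [← hT_add (z - c), sub_add_cancel, hzu]
      rw [← this, LinearEquiv.symm_apply_apply]
    simp only [LinearEquiv.coe_coe, hLz]
    rwa [add_sub_cancel]
  -- key inclusion : P + 0.05 • S ⊆ Ω
  have hkey : ∀ s ∈ S, P + (0.05 : ℝ) • s ∈ Ω := by
    intro s hs
    have hmem := hconv hx₀ (hS_sub s hs) (by norm_num : (0:ℝ) ≤ 0.95)
      (by norm_num : (0:ℝ) ≤ 0.05) (by norm_num)
    have heq : P + (0.05 : ℝ) • s = (0.95:ℝ) • x₀ + (0.05:ℝ) • (c + s) := by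
      rw [← hPx]; module
    rwa [heq]
  -- the half-ellipsoid pieces
  set Spos : Set (EuclideanSpace ℝ (Fin d)) := {s ∈ S | 0 ≤ ⟪v, s⟫} with hSpos
  set Sneg : Set (EuclideanSpace ℝ (Fin d)) := {s ∈ S | ⟪v, s⟫ ≤ 0} with hSneg
  set K : Set (EuclideanSpace ℝ (Fin d)) := (fun s => P + (0.05:ℝ) • s) '' Spos with hK
  have hKsub : K ⊆ {x ∈ Ω | 0 ≤ ⟪v, x - P⟫} := by
    rintro x ⟨s, ⟨hsS, hsv⟩, rfl⟩
    refine ⟨hkey s hsS, ?_⟩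
    have heq : P + (0.05:ℝ) • s - P = (0.05:ℝ) • s := by abel
    rw [heq, real_inner_smul_right]
    positivity
  -- volume of K
  have hvolK : volume K = ENNReal.ofReal ((0.05:ℝ)^d) * volume Spos := by
    have h1 : K = (fun x => P + x) '' ((0.05:ℝ) • Spos) := by
      rw [hK, ← Set.image_smul, Set.image_image]
    rw [h1]
    have h2 : volume ((fun x => P + x) '' ((0.05:ℝ) • Spos))
        = volume ((0.05:ℝ) • Spos) := by
      simpa using measure_preimage_add volume (-P) ((0.05:ℝ) • Spos)
    rw [h2, Measure.addHaar_smul, finrank_euclideanSpace_fin]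
    congr 2
    rw [abs_of_nonneg (by positivity)]
  -- symmetry of S
  have hSsymm : ∀ x, x ∈ S → -x ∈ S := by
    rintro x ⟨u, hu, rfl⟩
    refine ⟨-u, ?_, ?_⟩
    · simpa using hu
    · simp
  have hnegneg : Sneg = (-1:ℝ) • Spos := by
    ext x
    simp only [Set.mem_smul_set, hSneg, hSpos, Set.mem_setOf_eq]
    constructor
    · rintro ⟨hxS, hxv⟩
      exact ⟨-x, ⟨hSsymm x hxS, by simpa using hxv⟩, by simp⟩
    · rintro ⟨s, ⟨hsS, hsv⟩, rfl⟩
      refine ⟨by simpa using hSsymm s hsS, by simpa using hsv⟩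
  have hvolneg : volume Sneg = volume Spos := by
    rw [hnegneg, Measure.addHaar_smul, finrank_euclideanSpace_fin]
    simp [abs_pow]
  have hScover : volume S ≤ 2 * volume Spos := by
    have h1 : S ⊆ Spos ∪ Sneg := by
      intro x hx
      rcases le_total 0 ⟪v, x⟫ with h | h
      · exact Or.inl ⟨hx, h⟩
      · exact Or.inr ⟨hx, h⟩
    calc volume S ≤ volume (Spos ∪ Sneg) := measure_mono h1
      _ ≤ volume Spos + volume Sneg := measure_union_le _ _
      _ = 2 * volume Spos := by rw [hvolneg, two_mul]
  -- volume of S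
  set ω : ℝ≥0∞ := volume (Metric.ball (0 : EuclideanSpace ℝ (Fin d)) 1) with hω
  set δ : ℝ≥0∞ := ENNReal.ofReal
    |LinearMap.det (L.symm : EuclideanSpace ℝ (Fin d) →ₗ[ℝ] EuclideanSpace ℝ (Fin d))| with hδ
  have hvolS : volume S = δ * ω := by
    rw [hSdef, Measure.addHaar_image_linearMap,
      Measure.addHaar_closedBall volume _ zero_le_one, finrank_euclideanSpace_fin]
    simp [hδ, hω]
  -- upper bound on volume of Ω
  have hvolΩ : volume Ω ≤ δ * ENNReal.ofReal ((d:ℝ)^d) * ω := by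
    have hsub : Ω ⊆ (fun y => c + y) ''
        ((L.symm : EuclideanSpace ℝ (Fin d) →ₗ[ℝ] EuclideanSpace ℝ (Fin d)) ''
          Metric.closedBall 0 (d:ℝ)) := by
      intro x hx
      refine ⟨L.symm (T x), ⟨T x, hT2 ⟨x, hx, rfl⟩, rfl⟩, ?_⟩
      have h1 : L (x - c) = T x := by rw [← hT_add (x - c), sub_add_cancel]
      have h2 : L.symm (T x) = x - c := by rw [← h1, LinearEquiv.symm_apply_apply]
      simp only [LinearEquiv.coe_coe, h2]
      abel
    calc volume Ω ≤ volume ((fun y => c + y) ''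
          ((L.symm : EuclideanSpace ℝ (Fin d) →ₗ[ℝ] EuclideanSpace ℝ (Fin d)) ''
            Metric.closedBall 0 (d:ℝ))) := measure_mono hsub
      _ = volume ((L.symm : EuclideanSpace ℝ (Fin d) →ₗ[ℝ] EuclideanSpace ℝ (Fin d)) ''
            Metric.closedBall 0 (d:ℝ)) := by
          simpa using measure_preimage_add volume (-c) _
      _ = δ * ENNReal.ofReal ((d:ℝ)^d) * ω := by
          rw [Measure.addHaar_image_linearMap,
            Measure.addHaar_closedBall volume _ (le_of_lt hd0), finrank_euclideanSpace_fin,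
            ← hδ, ← hω, mul_assoc]
  -- finiteness facts
  have hVLtop : volume {x ∈ Ω | 0 ≤ ⟪v, x - P⟫} ≠ ⊤ :=
    (lt_of_le_of_lt (measure_mono (Set.sep_subset _ _)) hcomp.measure_lt_top).ne
  -- the real-number constant inequality
  set a : ℝ := 1 / (2 * d) * (20 * (d : ℝ)) ^ (-(d : ℝ)) with ha
  have ha0 : 0 ≤ a := by
    apply mul_nonneg
    · positivity
    · exact Real.rpow_nonneg (by positivity) _
  have harith : a * (d:ℝ)^d ≤ (0.05:ℝ)^d / 2 := by
    have h20 : (0:ℝ) < (20 * d) := by positivity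
    have hrw : (20 * (d : ℝ)) ^ (-(d : ℝ)) = ((20 * (d:ℝ))^d)⁻¹ := by
      rw [← Real.rpow_natCast (20 * (d:ℝ)) d, ← Real.rpow_neg h20.le]
    have h005 : (0.05:ℝ) = (20:ℝ)⁻¹ := by norm_num
    rw [ha, hrw, h005, mul_pow, inv_pow, mul_inv]
    have h20d : (0:ℝ) < (20:ℝ)^d := by positivity
    have hdd : (0:ℝ) < (d:ℝ)^d := by positivity
    have e1 : 1 / (2*(d:ℝ)) * (((20:ℝ)^d)⁻¹ * (((d:ℝ))^d)⁻¹) * (d:ℝ)^d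
        = ((20:ℝ)^d)⁻¹ * (1/(2*(d:ℝ))) := by
      field_simp
    have e2 : ((20:ℝ)^d)⁻¹ / 2 = ((20:ℝ)^d)⁻¹ * (1/2) := by ring
    rw [e1, e2]
    apply mul_le_mul_of_nonneg_left _ (by positivity)
    have hd1 : (1:ℝ) ≤ d := by exact_mod_cast hd
    rw [div_le_div_iff₀ (by positivity) (by norm_num)]
    nlinarith [hd1]
  -- the ENNReal chain
  have hENN : ENNReal.ofReal a * volume Ω ≤ volume {x ∈ Ω | 0 ≤ ⟪v, x - P⟫} := by
    calc ENNReal.ofReal a * volume Ω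
        ≤ ENNReal.ofReal a * (δ * ENNReal.ofReal ((d:ℝ)^d) * ω) :=
          mul_le_mul_right hvolΩ _
      _ = (ENNReal.ofReal a * ENNReal.ofReal ((d:ℝ)^d)) * (δ * ω) := by ring
      _ = ENNReal.ofReal (a * (d:ℝ)^d) * (δ * ω) := by
          rw [ENNReal.ofReal_mul ha0]
      _ ≤ ENNReal.ofReal ((0.05:ℝ)^d / 2) * (δ * ω) :=
          mul_le_mul_left (ENNReal.ofReal_le_ofReal harith) _
      _ ≤ ENNReal.ofReal ((0.05:ℝ)^d / 2) * (2 * volume Spos) := by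
          rw [← hvolS]; exact mul_le_mul_right hScover _
      _ = ENNReal.ofReal ((0.05:ℝ)^d / 2) * 2 * volume Spos := by ring
      _ = ENNReal.ofReal ((0.05:ℝ)^d) * volume Spos := by
          congr 1
          rw [← ENNReal.ofReal_ofNat, ← ENNReal.ofReal_mul (by positivity)]
          norm_num
      _ = volume K := hvolK.symm
      _ ≤ volume {x ∈ Ω | 0 ≤ ⟪v, x - P⟫} := measure_mono hKsub
  -- conclude
  have hfin := ENNReal.toReal_mono hVLtop hENN
  rwa [ENNReal.toReal_mul, ENNReal.toReal_ofReal ha0] at hfin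
end

section
/- Let Ω be a polytope in ℝ^d given by Ω = {x : aᵢ ≤ vᵢᵀx ≤ bᵢ, i = 1,...,F} for unit vectors vᵢ, with Ω contained in the unit ball and F bounded by a constant depending on d. Suppose Ω is partitioned using the δ-grid S into convex subsets Ω₁,...,Ω_k such that the sets Ωᵢ∩S are disjoint with union Ω∩S, each Ωᵢ is an intersection of at most s pairs of parallel halfspaces, and f₀ is a convex function on Ω affine on each Ωᵢ. If the discrete metric entropy bound log N(ε, B_S^p(g; τ; Ωᵢ), ℓ_S(·,Ωᵢ,p)) ≤ (c log(1/δ))^s·(τ/ε)^{d/2} holds for all affine g, all τ, ε > 0 and each Ωᵢ, then log N(ε, B_S^p(f₀; t; Ω), ℓ_S(·,Ω,p)) ≤ k·(t/ε)^{d/2}·(c' log(1/δ))^s + k·log n, where n = #(Ω∩S) and c' depends only on c, d, p. -/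
open scoped RealInnerProductSpace

/-- The point of the regular `δ`-grid in `ℝ^d` with integer index vector `k`. -/
noncomputable def gridPt (d : ℕ) (δ : ℝ) (k : Fin d → ℤ) : EuclideanSpace ℝ (Fin d) :=
  (EuclideanSpace.equiv (Fin d) ℝ).symm fun i => (k i : ℝ) * δ

/-- The discrete `ℓ_S(·, A, p)` quasi-norm of `f` over the grid points of the `δ`-grid in `A`:
`((1/#(A∩S)) Σ_{s ∈ A∩S} |f(s)|^p)^{1/p}`. -/
noncomputable def discNorm (d : ℕ) (δ p : ℝ) (f : EuclideanSpace ℝ (Fin d) → ℝ)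
    (A : Set (EuclideanSpace ℝ (Fin d))) : ℝ :=
  ((∑ᶠ k ∈ {k : Fin d → ℤ | gridPt d δ k ∈ A}, |f (gridPt d δ k)| ^ p) /
    ({k : Fin d → ℤ | gridPt d δ k ∈ A}.ncard : ℝ)) ^ (1 / p)

private lemma aux_rpow_le {p t X : ℝ} (hp : 1 ≤ p) (ht : 0 ≤ t) (hX : 0 ≤ X) {n : ℕ}
    (h : X ≤ n * t ^ p) : (X / (n : ℝ)) ^ (1 / p) ≤ t := by
  have hp0 : 0 < p := lt_of_lt_of_le one_pos hp
  rcases Nat.eq_zero_or_pos n with hn | hn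
  · subst hn
    simp only [Nat.cast_zero, div_zero]
    rw [Real.zero_rpow (by positivity)]
    exact ht
  · have hn' : (0 : ℝ) < n := by exact_mod_cast hn
    have h1 : X / n ≤ t ^ p := by rw [div_le_iff₀ hn', mul_comm]; exact h
    calc (X / n) ^ (1 / p) ≤ (t ^ p) ^ (1 / p) :=
          Real.rpow_le_rpow (by positivity) h1 (by positivity)
    _ = t := by rw [one_div]; exact Real.rpow_rpow_inv ht hp0.ne'

private lemma aux_le_rpow {p t X : ℝ} (hp : 1 ≤ p) (hX : 0 ≤ X) {n : ℕ}
    (hn0 : n = 0 → X = 0) (h : (X / (n : ℝ)) ^ (1 / p) ≤ t) : X ≤ n * t ^ p := by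
  have hp0 : 0 < p := lt_of_lt_of_le one_pos hp
  rcases Nat.eq_zero_or_pos n with hn | hn
  · simp [hn, hn0 hn]
  · have hn' : (0 : ℝ) < n := by exact_mod_cast hn
    have h2 : ((X / n) ^ (1 / p)) ^ p ≤ t ^ p :=
      Real.rpow_le_rpow (by positivity) h hp0.le
    rw [one_div, Real.rpow_inv_rpow (by positivity) hp0.ne'] at h2
    rw [mul_comm]
    exact (div_le_iff₀ hn').mp h2

private lemma discNorm_eq_sum {d : ℕ} {δ p : ℝ}
    (f : EuclideanSpace ℝ (Fin d) → ℝ) {A : Set (EuclideanSpace ℝ (Fin d))}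
    (hA : {k : Fin d → ℤ | gridPt d δ k ∈ A}.Finite) :
    discNorm d δ p f A =
      ((∑ k ∈ hA.toFinset, |f (gridPt d δ k)| ^ p) / (hA.toFinset.card : ℝ)) ^ (1 / p) := by
  have h1 : ∑ᶠ k ∈ (hA.toFinset : Set (Fin d → ℤ)), |f (gridPt d δ k)| ^ p
      = ∑ k ∈ hA.toFinset, |f (gridPt d δ k)| ^ p := finsum_mem_coe_finset _ _
  rw [hA.coe_toFinset] at h1
  rw [discNorm, Set.ncard_eq_toFinset_card _ hA, h1]

open Classical in
private noncomputable def glue {d K : ℕ} (Ωi : Fin K → Set (EuclideanSpace ℝ (Fin d)))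
    (hs : Fin K → (EuclideanSpace ℝ (Fin d) → ℝ)) : EuclideanSpace ℝ (Fin d) → ℝ :=
  fun x => if hx : ∃ i, x ∈ Ωi i then hs hx.choose x else 0

private lemma glue_eval {d K : ℕ} {Ωi : Fin K → Set (EuclideanSpace ℝ (Fin d))}
    (hs : Fin K → (EuclideanSpace ℝ (Fin d) → ℝ)) {x : EuclideanSpace ℝ (Fin d)} {i : Fin K}
    (hxi : x ∈ Ωi i) (hu : ∀ j, x ∈ Ωi j → j = i) : glue Ωi hs x = hs i x := by
  have hx : ∃ j, x ∈ Ωi j := ⟨i, hxi⟩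
  rw [glue, dif_pos hx, hu _ hx.choose_spec]


set_option maxHeartbeats 1000000 in
/-- Stratification corollary for discrete metric entropy of convex functions near a piecewise
affine `f₀`: if `Ω` is a polytope partitioned (along the grid) into `K` convex pieces `Ωᵢ`,
each an intersection of at most `s` slabs, on which `f₀` is affine, and if the entropy of the
discrete balls around affine functions on each piece satisfies
`log N(ε, B_S^p(g;τ;Ωᵢ)) ≤ (c log(1/δ))^s (τ/ε)^{d/2}`, then
`log N(ε, B_S^p(f₀;t;Ω)) ≤ K (t/ε)^{d/2} (c' log(1/δ))^s + K log n` with `n = #(Ω∩S)` and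
`c'` depending only on `c, d, p`. -/
theorem entropy_piecewise_affine (d : ℕ) (hd : 1 ≤ d) (p : ℝ) (hp : 1 ≤ p)
    (c : ℝ) (hc : 0 < c) :
    ∃ c' : ℝ, 0 < c' ∧
    ∀ (δ : ℝ), 0 < δ → δ < 1 →
    ∀ (F : ℕ) (v : Fin F → EuclideanSpace ℝ (Fin d)) (a b : Fin F → ℝ),
    (∀ i, ‖v i‖ = 1) →
    ∀ Ω : Set (EuclideanSpace ℝ (Fin d)),
      Ω = {x | ∀ i, a i ≤ ⟪v i, x⟫ ∧ ⟪v i, x⟫ ≤ b i} →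
      Ω ⊆ Metric.closedBall 0 1 →
      {k : Fin d → ℤ | gridPt d δ k ∈ Ω}.Finite →
      {k : Fin d → ℤ | gridPt d δ k ∈ Ω}.Nonempty →
    ∀ (K s : ℕ) (Ωi : Fin K → Set (EuclideanSpace ℝ (Fin d))),
      (∀ i, Convex ℝ (Ωi i)) →
      (∀ i, Ωi i ⊆ Ω) →
      (∀ i, ∃ (m : ℕ) (u : Fin m → EuclideanSpace ℝ (Fin d)) (α β : Fin m → ℝ),
        m ≤ s ∧ (∀ j, ‖u j‖ = 1) ∧
        Ωi i = {x | ∀ j, α j ≤ ⟪u j, x⟫ ∧ ⟪u j, x⟫ ≤ β j}) →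
      (∀ k : Fin d → ℤ, gridPt d δ k ∈ Ω → ∃! i, gridPt d δ k ∈ Ωi i) →
    ∀ f₀ : EuclideanSpace ℝ (Fin d) → ℝ,
      ConvexOn ℝ Ω f₀ →
      (∀ i, ∃ (A : EuclideanSpace ℝ (Fin d) →ₗ[ℝ] ℝ) (β : ℝ),
        ∀ x ∈ Ωi i, f₀ x = A x + β) →
    -- entropy hypothesis on each piece, around affine functions
    (∀ i : Fin K, ∀ g : EuclideanSpace ℝ (Fin d) → ℝ,
      (∃ (A : EuclideanSpace ℝ (Fin d) →ₗ[ℝ] ℝ) (β : ℝ), ∀ x, g x = A x + β) →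
      ∀ τ : ℝ, 0 < τ → ∀ ε : ℝ, 0 < ε →
        ∃ G : Set (EuclideanSpace ℝ (Fin d) → ℝ), G.Finite ∧
          (G.ncard : ℝ) ≤
            Real.exp ((c * Real.log (1 / δ)) ^ s * (τ / ε) ^ ((d : ℝ) / 2)) ∧
          ∀ f : EuclideanSpace ℝ (Fin d) → ℝ, ConvexOn ℝ (Ωi i) f →
            discNorm d δ p (f - g) (Ωi i) ≤ τ →
            ∃ h ∈ G, discNorm d δ p (f - h) (Ωi i) ≤ ε) →
    -- conclusion: entropy bound on Ω
    ∀ t : ℝ, 0 < t → ∀ ε : ℝ, 0 < ε →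
      ∃ G : Set (EuclideanSpace ℝ (Fin d) → ℝ), G.Finite ∧
        (G.ncard : ℝ) ≤
          Real.exp ((K : ℝ) * (t / ε) ^ ((d : ℝ) / 2) * (c' * Real.log (1 / δ)) ^ s +
            (K : ℝ) * Real.log ({k : Fin d → ℤ | gridPt d δ k ∈ Ω}.ncard : ℝ)) ∧
        ∀ f : EuclideanSpace ℝ (Fin d) → ℝ, ConvexOn ℝ Ω f →
          discNorm d δ p (f - f₀) Ω ≤ t →
          ∃ h ∈ G, discNorm d δ p (f - h) Ω ≤ ε := by
  classical
  have hp0 : (0:ℝ) < p := lt_of_lt_of_le one_pos hp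
  refine ⟨c * 2 ^ ((d:ℝ)/2), by positivity, ?_⟩
  intro δ hδ0 hδ1 F v a b hv Ω hΩeq hΩball hSfin hSne
  intro K s Ωi hconv hsub hslab huniq f₀ hf₀ hf₀aff hEnt t ht ε hε
  obtain ⟨k₀, hk₀⟩ := hSne
  obtain ⟨i₀, hi₀, -⟩ := huniq k₀ hk₀
  -- s ≥ 1
  have hs1 : 1 ≤ s := by
    by_contra hs0
    push_neg at hs0
    interval_cases s
    obtain ⟨m, u, α, β, hm, -, hΩi⟩ := hslab i₀
    have hm0 : m = 0 := Nat.le_zero.mp hm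
    subst hm0
    have hx : (EuclideanSpace.single (⟨0, hd⟩ : Fin d) (2:ℝ)) ∈ Ωi i₀ := by
      rw [hΩi]; intro j; exact j.elim0
    have h2 := hΩball (hsub i₀ hx)
    rw [Metric.mem_closedBall, dist_zero_right, EuclideanSpace.norm_single] at h2
    norm_num [Real.norm_eq_abs] at h2
  set S : Set (Fin d → ℤ) := {k : Fin d → ℤ | gridPt d δ k ∈ Ω} with hSdef
  set n : ℕ := S.ncard with hndef
  have hn1 : 1 ≤ n := (Set.ncard_pos hSfin).mpr ⟨k₀, hk₀⟩
  have hnpos : (0:ℝ) < n := by exact_mod_cast hn1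
  set L : ℝ := Real.log (1/δ) with hLdef
  have hL0 : 0 < L := Real.log_pos (one_lt_one_div hδ0 hδ1)
  -- the affine pieces of f₀
  choose Aℓ βℓ hAβ using hf₀aff
  -- scales for stratum level m
  set τf : ℕ → ℝ := fun m => ((max 1 m : ℕ) : ℝ) ^ (1/p) * t with hτfdef
  set εf : ℕ → ℝ := fun m => ((max 1 m : ℕ) : ℝ) ^ (1/p) * ε / (2:ℝ) ^ (1/p) with hεfdef
  have hMpos : ∀ m : ℕ, (0:ℝ) < ((max 1 m : ℕ) : ℝ) := by
    intro m
    have h1 : 1 ≤ max 1 m := le_max_left _ _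
    exact_mod_cast lt_of_lt_of_le zero_lt_one (by exact_mod_cast h1)
  have hτfpos : ∀ m, 0 < τf m := fun m => by
    have := hMpos m; simp only [hτfdef]; positivity
  have hεfpos : ∀ m, 0 < εf m := fun m => by
    have := hMpos m; simp only [hεfdef]; positivity
  have hratio : ∀ m : ℕ, τf m / εf m = (2:ℝ) ^ (1/p) * (t/ε) := by
    intro m
    have hM' : ((max 1 m : ℕ) : ℝ) ^ (1/p) ≠ 0 := by
      have := hMpos m; positivity
    have h2 : ((2:ℝ) ^ ((1:ℝ)/p)) ≠ 0 := by positivity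
    simp only [hτfdef, hεfdef]
    field_simp
  -- powers of the scales
  have hτp : ∀ m : ℕ, (τf m) ^ p = ((max 1 m : ℕ) : ℝ) * t ^ p := by
    intro m
    simp only [hτfdef]
    rw [Real.mul_rpow (by positivity) ht.le, one_div,
      Real.rpow_inv_rpow (hMpos m).le hp0.ne']
  have hεp : ∀ m : ℕ, (εf m) ^ p = ((max 1 m : ℕ) : ℝ) * ε ^ p / 2 := by
    intro m
    simp only [hεfdef]
    rw [Real.div_rpow (by positivity) (by positivity),
      Real.mul_rpow (by positivity) hε.le, one_div,
      Real.rpow_inv_rpow (hMpos m).le hp0.ne',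
      Real.rpow_inv_rpow (by norm_num) hp0.ne']
  -- nets on each piece at each level
  have hEnt' : ∀ (i : Fin K) (m : ℕ),
      ∃ G : Set (EuclideanSpace ℝ (Fin d) → ℝ), G.Finite ∧
        (G.ncard : ℝ) ≤ Real.exp ((c*L)^s * ((2:ℝ)^(1/p) * (t/ε)) ^ ((d:ℝ)/2)) ∧
        ∀ f : EuclideanSpace ℝ (Fin d) → ℝ, ConvexOn ℝ (Ωi i) f →
          discNorm d δ p (f - fun x => Aℓ i x + βℓ i) (Ωi i) ≤ τf m →
          ∃ h ∈ G, discNorm d δ p (f - h) (Ωi i) ≤ εf m := by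
    intro i m
    obtain ⟨G, hGfin, hGcard, hGcov⟩ :=
      hEnt i (fun x => Aℓ i x + βℓ i) ⟨Aℓ i, βℓ i, fun x => rfl⟩
        (τf m) (hτfpos m) (εf m) (hεfpos m)
    refine ⟨G, hGfin, ?_, hGcov⟩
    rwa [hratio m] at hGcard
  choose 𝒢 h𝒢fin h𝒢card h𝒢cov using hEnt'
  set GF : Fin K → ℕ → Finset (EuclideanSpace ℝ (Fin d) → ℝ) :=
    fun i m => (h𝒢fin i m).toFinset with hGFdef
  set T : Finset (Fin K → ℕ) := Fintype.piFinset (fun _ => Finset.Icc 1 n) with hTdef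
  set GG : Finset (EuclideanSpace ℝ (Fin d) → ℝ) :=
    T.biUnion (fun σ => (Fintype.piFinset (fun i => GF i (σ i))).image (glue Ωi)) with hGGdef
  refine ⟨↑GG, GG.finite_toSet, ?_, ?_⟩
  · -- cardinality bound
    set B : ℝ := (c*L)^s * ((2:ℝ)^(1/p) * (t/ε)) ^ ((d:ℝ)/2) with hBdef
    have h2 : ∀ σ ∈ T,
        (((Fintype.piFinset (fun i => GF i (σ i))).image (glue Ωi)).card : ℝ)
          ≤ Real.exp ((K:ℝ) * B) := by
      intro σ _
      calc (((Fintype.piFinset (fun i => GF i (σ i))).image (glue Ωi)).card : ℝ)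
          ≤ ((Fintype.piFinset (fun i => GF i (σ i))).card : ℝ) := by
            exact_mod_cast Finset.card_image_le
        _ = ∏ i, ((GF i (σ i)).card : ℝ) := by
            rw [Fintype.card_piFinset]; push_cast; ring
        _ ≤ ∏ _i : Fin K, Real.exp B := by
            apply Finset.prod_le_prod (fun i _ => by positivity)
            intro i _
            have hcb := h𝒢card i (σ i)
            rw [Set.ncard_eq_toFinset_card _ (h𝒢fin i (σ i))] at hcb
            simp only [hGFdef]
            exact hcb
        _ = Real.exp ((K:ℝ) * B) := by
            rw [Finset.prod_const, ← Real.exp_nat_mul]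
            simp
    have hcard1 : (GG.card : ℝ) ≤ (T.card : ℝ) * Real.exp ((K:ℝ) * B) := by
      have h1 : GG.card ≤ ∑ σ ∈ T,
          ((Fintype.piFinset (fun i => GF i (σ i))).image (glue Ωi)).card := by
        rw [hGGdef]; exact Finset.card_biUnion_le
      calc (GG.card : ℝ) ≤ ∑ σ ∈ T,
            (((Fintype.piFinset (fun i => GF i (σ i))).image (glue Ωi)).card : ℝ) := by
            exact_mod_cast h1
        _ ≤ ∑ _σ ∈ T, Real.exp ((K:ℝ) * B) := Finset.sum_le_sum h2
        _ = (T.card : ℝ) * Real.exp ((K:ℝ) * B) := by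
            rw [Finset.sum_const, nsmul_eq_mul]
    have hTcard : (T.card : ℝ) = (n:ℝ) ^ K := by
      rw [hTdef, Fintype.card_piFinset]
      simp [Nat.card_Icc]
    have hB : B ≤ (t/ε) ^ ((d:ℝ)/2) * (c * 2 ^ ((d:ℝ)/2) * L) ^ s := by
      rw [hBdef, Real.mul_rpow (by positivity) (by positivity)]
      have e1 : ((2:ℝ)^((1:ℝ)/p)) ^ ((d:ℝ)/2) = (2:ℝ) ^ ((1/p) * ((d:ℝ)/2)) := by
        rw [← Real.rpow_mul (by norm_num)]
      have e2 : (c * 2 ^ ((d:ℝ)/2) * L) ^ s = (c*L)^s * ((2:ℝ) ^ ((d:ℝ)/2)) ^ s := by ring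
      rw [e1, e2]
      have h3 : (2:ℝ) ^ ((1/p) * ((d:ℝ)/2)) ≤ (2:ℝ) ^ ((d:ℝ)/2) := by
        apply Real.rpow_le_rpow_of_exponent_le (by norm_num)
        have h4 : (1:ℝ)/p ≤ 1 := by
          rw [div_le_one hp0]; exact hp
        calc (1/p) * ((d:ℝ)/2) ≤ 1 * ((d:ℝ)/2) :=
              mul_le_mul_of_nonneg_right h4 (by positivity)
          _ = (d:ℝ)/2 := one_mul _
      have h5 : (2:ℝ) ^ ((d:ℝ)/2) ≤ ((2:ℝ) ^ ((d:ℝ)/2)) ^ s := by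
        apply le_self_pow₀ _ (by omega)
        rw [show (1:ℝ) = (2:ℝ) ^ (0:ℝ) by simp]
        exact Real.rpow_le_rpow_of_exponent_le (by norm_num) (by positivity)
      calc (c*L)^s * ((2:ℝ) ^ ((1/p)*((d:ℝ)/2)) * (t/ε) ^ ((d:ℝ)/2))
          = ((c*L)^s * (2:ℝ) ^ ((1/p)*((d:ℝ)/2))) * (t/ε) ^ ((d:ℝ)/2) := by ring
        _ ≤ ((c*L)^s * ((2:ℝ) ^ ((d:ℝ)/2)) ^ s) * (t/ε) ^ ((d:ℝ)/2) := by
            apply mul_le_mul_of_nonneg_right _ (by positivity)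
            exact mul_le_mul_of_nonneg_left (h3.trans h5) (by positivity)
        _ = (t/ε) ^ ((d:ℝ)/2) * ((c*L)^s * ((2:ℝ) ^ ((d:ℝ)/2)) ^ s) := by ring
    rw [Set.ncard_coe_finset]
    calc (GG.card : ℝ) ≤ (T.card : ℝ) * Real.exp ((K:ℝ) * B) := hcard1
      _ = Real.exp ((K:ℝ) * Real.log (n:ℝ)) * Real.exp ((K:ℝ) * B) := by
          have hnK : Real.exp ((K:ℝ) * Real.log (n:ℝ)) = (n:ℝ) ^ K := by
            rw [Real.exp_nat_mul, Real.exp_log hnpos]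
          rw [hTcard, hnK]
      _ = Real.exp ((K:ℝ) * B + (K:ℝ) * Real.log (n:ℝ)) := by
          rw [← Real.exp_add]; ring_nf
      _ ≤ Real.exp ((K:ℝ) * (t/ε) ^ ((d:ℝ)/2) * (c * 2 ^ ((d:ℝ)/2) * L) ^ s
            + (K:ℝ) * Real.log (n:ℝ)) := by
          apply Real.exp_le_exp.mpr
          have h6 : (K:ℝ) * B ≤ (K:ℝ) * ((t/ε) ^ ((d:ℝ)/2) * (c * 2 ^ ((d:ℝ)/2) * L) ^ s) :=
            mul_le_mul_of_nonneg_left hB (by positivity)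
          nlinarith [h6]
  · -- covering
    intro f hf hft
    have hSifin : ∀ i, {k : Fin d → ℤ | gridPt d δ k ∈ Ωi i}.Finite := fun i =>
      hSfin.subset (fun k hk => hsub i hk)
    set Ti : Fin K → Finset (Fin d → ℤ) := fun i => (hSifin i).toFinset with hTidef
    set TS : Finset (Fin d → ℤ) := hSfin.toFinset with hTSdef
    have hmemTi : ∀ i k, k ∈ Ti i ↔ gridPt d δ k ∈ Ωi i := by
      intro i k; simp only [hTidef]; exact (hSifin i).mem_toFinset
    have hmemTS : ∀ k, k ∈ TS ↔ gridPt d δ k ∈ Ω := by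
      intro k; simp only [hTSdef]; exact hSfin.mem_toFinset
    have hTScard : TS.card = n := by
      rw [hndef, Set.ncard_eq_toFinset_card _ hSfin, hTSdef]
    have hTS : TS = Finset.univ.biUnion Ti := by
      ext k
      rw [hmemTS, Finset.mem_biUnion]
      constructor
      · intro hk
        obtain ⟨i, hi, -⟩ := huniq k hk
        exact ⟨i, Finset.mem_univ i, (hmemTi i k).mpr hi⟩
      · rintro ⟨i, -, hi⟩
        exact hsub i ((hmemTi i k).mp hi)
    have hdisj : Set.PairwiseDisjoint (↑(Finset.univ : Finset (Fin K))) Ti := by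
      intro i _ j _ hij
      rw [Function.onFun, Finset.disjoint_left]
      intro k hki hkj
      obtain ⟨i', -, hu⟩ := huniq k (hsub i ((hmemTi i k).mp hki))
      exact hij ((hu i ((hmemTi i k).mp hki)).trans (hu j ((hmemTi j k).mp hkj)).symm)
    have hsum_part : ∀ g : (Fin d → ℤ) → ℝ, ∑ k ∈ TS, g k = ∑ i, ∑ k ∈ Ti i, g k := by
      intro g; rw [hTS]; exact Finset.sum_biUnion hdisj
    have hcard_part : (∑ i, ((Ti i).card : ℝ)) = (n : ℝ) := by
      have h1 := hsum_part (fun _ => (1:ℝ))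
      simp only [Finset.sum_const, nsmul_eq_mul, mul_one] at h1
      rw [← hTScard]; exact_mod_cast h1.symm
    -- the total sum is controlled
    have hXtot : ∑ k ∈ TS, |(f - f₀) (gridPt d δ k)| ^ p ≤ (n : ℝ) * t ^ p := by
      have h1 := hft
      rw [discNorm_eq_sum (f - f₀) hSfin, ← hTSdef] at h1
      have h2 := aux_le_rpow hp
        (Finset.sum_nonneg fun k _ => Real.rpow_nonneg (abs_nonneg _) _)
        (fun h0 => by rw [Finset.card_eq_zero.mp h0, Finset.sum_empty]) h1
      rw [hTScard] at h2
      exact h2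
    -- strata levels
    set X : Fin K → ℝ := fun i => ∑ k ∈ Ti i, |(f - f₀) (gridPt d δ k)| ^ p with hXdef
    have hX0 : ∀ i, 0 ≤ X i := fun i =>
      Finset.sum_nonneg fun k _ => Real.rpow_nonneg (abs_nonneg _) _
    have hXle : ∀ i, X i ≤ (n:ℝ) * t ^ p := by
      intro i
      refine le_trans ?_ hXtot
      simp only [hXdef]
      apply Finset.sum_le_sum_of_subset_of_nonneg
      · intro k hk
        rw [hmemTS]; exact hsub i ((hmemTi i k).mp hk)
      · intro k _ _; exact Real.rpow_nonneg (abs_nonneg _) _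
    set σ : Fin K → ℕ := fun i => max 1 ⌈X i / (((Ti i).card : ℝ) * t ^ p)⌉₊ with hσdef
    have hσge1 : ∀ i, 1 ≤ σ i := fun i => by simp only [hσdef]; exact le_max_left _ _
    have hmax : ∀ i, (max 1 (σ i) : ℕ) = σ i := fun i => max_eq_right (hσge1 i)
    have hσT : σ ∈ T := by
      rw [hTdef, Fintype.mem_piFinset]
      intro i
      rw [Finset.mem_Icc]
      refine ⟨hσge1 i, ?_⟩
      simp only [hσdef]
      apply max_le hn1
      rw [Nat.ceil_le]
      rcases Nat.eq_zero_or_pos (Ti i).card with h0 | hposc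
      · rw [h0]
        push_cast
        rw [zero_mul, div_zero]
        positivity
      · have hcpos : (0:ℝ) < ((Ti i).card : ℝ) := by exact_mod_cast hposc
        have hD : (0:ℝ) < ((Ti i).card : ℝ) * t ^ p := by positivity
        rw [div_le_iff₀ hD]
        have hge1 : (1:ℝ) ≤ ((Ti i).card : ℝ) := by exact_mod_cast hposc
        calc X i ≤ (n:ℝ) * t ^ p := hXle i
          _ = ((n:ℝ) * t ^ p) * 1 := by ring
          _ ≤ ((n:ℝ) * t ^ p) * ((Ti i).card : ℝ) := by
              apply mul_le_mul_of_nonneg_left hge1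
              have htp : (0:ℝ) < t ^ p := Real.rpow_pos_of_pos ht p
              positivity
          _ = (n:ℝ) * (((Ti i).card : ℝ) * t ^ p) := by ring
    -- stratum property (a): X i ≤ card * σ i * t^p
    have hXσ : ∀ i, X i ≤ ((Ti i).card : ℝ) * (σ i : ℝ) * t ^ p := by
      intro i
      rcases Nat.eq_zero_or_pos (Ti i).card with h0 | hposc
      · have hTiempty : Ti i = ∅ := Finset.card_eq_zero.mp h0
        have hX0' : X i = 0 := by simp only [hXdef, hTiempty, Finset.sum_empty]
        rw [hX0', h0]
        norm_num
      · have hcpos : (0:ℝ) < ((Ti i).card : ℝ) := by exact_mod_cast hposc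
        have hD : (0:ℝ) < ((Ti i).card : ℝ) * t ^ p := by positivity
        have hceil : X i / (((Ti i).card : ℝ) * t ^ p) ≤ (σ i : ℝ) := by
          refine le_trans (Nat.le_ceil _) ?_
          exact_mod_cast le_max_right 1 ⌈X i / (((Ti i).card : ℝ) * t ^ p)⌉₊
        rw [div_le_iff₀ hD] at hceil
        calc X i ≤ (σ i : ℝ) * (((Ti i).card : ℝ) * t ^ p) := hceil
          _ = ((Ti i).card : ℝ) * (σ i : ℝ) * t ^ p := by ring
    -- stratum property (b): ∑ card σ ≤ 2 n
    have hσsum : ∑ i, ((Ti i).card : ℝ) * (σ i : ℝ) ≤ 2 * (n:ℝ) := by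
      have hper : ∀ i, ((Ti i).card : ℝ) * (σ i : ℝ) ≤ X i / t ^ p + ((Ti i).card : ℝ) := by
        intro i
        rcases Nat.eq_zero_or_pos (Ti i).card with h0 | hposc
        · rw [h0]
          simp only [Nat.cast_zero, zero_mul, add_zero]
          have := hX0 i
          positivity
        · have hcpos : (0:ℝ) < ((Ti i).card : ℝ) := by exact_mod_cast hposc
          have htp : (0:ℝ) < t ^ p := Real.rpow_pos_of_pos ht p
          have hD : (0:ℝ) < ((Ti i).card : ℝ) * t ^ p := by positivity
          set w : ℝ := X i / (((Ti i).card : ℝ) * t ^ p) with hwdef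
          have hw0 : 0 ≤ w := div_nonneg (hX0 i) hD.le
          have hσle : (σ i : ℝ) ≤ w + 1 := by
            simp only [hσdef, ← hwdef]
            push_cast [Nat.cast_max]
            apply max_le (by linarith)
            exact le_of_lt (Nat.ceil_lt_add_one hw0)
          calc ((Ti i).card : ℝ) * (σ i : ℝ) ≤ ((Ti i).card : ℝ) * (w + 1) :=
                mul_le_mul_of_nonneg_left hσle hcpos.le
            _ = ((Ti i).card : ℝ) * w + ((Ti i).card : ℝ) := by ring
            _ = X i / t ^ p + ((Ti i).card : ℝ) := by
                rw [hwdef]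
                congr 1
                field_simp
      have htp : (0:ℝ) < t ^ p := Real.rpow_pos_of_pos ht p
      have hsX : ∑ i, X i ≤ (n:ℝ) * t ^ p := by
        have h1 := hsum_part (fun k => |(f - f₀) (gridPt d δ k)| ^ p)
        simp only [hXdef]
        rw [← h1]
        exact hXtot
      calc ∑ i, ((Ti i).card : ℝ) * (σ i : ℝ)
          ≤ ∑ i, (X i / t ^ p + ((Ti i).card : ℝ)) := Finset.sum_le_sum fun i _ => hper i
        _ = (∑ i, X i) / t ^ p + ∑ i, ((Ti i).card : ℝ) := by
            rw [Finset.sum_add_distrib, Finset.sum_div]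
        _ ≤ (n:ℝ) + (n:ℝ) := by
            apply add_le_add
            · rw [div_le_iff₀ htp]; exact hsX
            · rw [hcard_part]
        _ = 2 * (n:ℝ) := by ring
    -- cover each piece
    have hcovered : ∀ i, ∃ h ∈ 𝒢 i (σ i), discNorm d δ p (f - h) (Ωi i) ≤ εf (σ i) := by
      intro i
      apply h𝒢cov i (σ i) f (hf.subset (hsub i) (hconv i))
      rw [discNorm_eq_sum _ (hSifin i)]
      apply aux_rpow_le hp (hτfpos (σ i)).le
        (Finset.sum_nonneg fun k _ => Real.rpow_nonneg (abs_nonneg _) _)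
      have hsum_eq : ∑ k ∈ (hSifin i).toFinset,
          |(f - fun x => Aℓ i x + βℓ i) (gridPt d δ k)| ^ p = X i := by
        simp only [hXdef, hTidef]
        apply Finset.sum_congr rfl
        intro k hk
        have hkΩi : gridPt d δ k ∈ Ωi i := (hSifin i).mem_toFinset.mp hk
        simp only [Pi.sub_apply]
        rw [← hAβ i _ hkΩi]
      rw [hsum_eq, hτp (σ i), hmax i]
      have hcardTi : (hSifin i).toFinset.card = (Ti i).card := by rw [hTidef]
      rw [hcardTi]
      calc X i ≤ ((Ti i).card : ℝ) * (σ i : ℝ) * t ^ p := hXσ i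
        _ = ((Ti i).card : ℝ) * ((σ i : ℝ) * t ^ p) := by ring
    choose hfun hmem hcov using hcovered
    refine ⟨glue Ωi hfun, ?_, ?_⟩
    · -- membership
      rw [Finset.mem_coe, hGGdef]
      apply Finset.mem_biUnion.mpr
      refine ⟨σ, hσT, Finset.mem_image_of_mem _ ?_⟩
      rw [Fintype.mem_piFinset]
      intro i
      simp only [hGFdef]
      exact (h𝒢fin i (σ i)).mem_toFinset.mpr (hmem i)
    · -- distance bound
      rw [discNorm_eq_sum _ hSfin, ← hTSdef]
      apply aux_rpow_le hp hε.le
        (Finset.sum_nonneg fun k _ => Real.rpow_nonneg (abs_nonneg _) _)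
      have hglue : ∀ i, ∀ k ∈ Ti i,
          |(f - glue Ωi hfun) (gridPt d δ k)| ^ p = |(f - hfun i) (gridPt d δ k)| ^ p := by
        intro i k hk
        have hkΩi : gridPt d δ k ∈ Ωi i := (hmemTi i k).mp hk
        have hu : ∀ j, gridPt d δ k ∈ Ωi j → j = i := by
          intro j hj
          obtain ⟨i', -, hu'⟩ := huniq k (hsub i hkΩi)
          exact (hu' j hj).trans (hu' i hkΩi).symm
        simp only [Pi.sub_apply]
        rw [glue_eval hfun hkΩi hu]
      have hpience : ∀ i, ∑ k ∈ Ti i, |(f - hfun i) (gridPt d δ k)| ^ p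
          ≤ ((Ti i).card : ℝ) * (εf (σ i)) ^ p := by
        intro i
        have h1 := hcov i
        rw [discNorm_eq_sum _ (hSifin i)] at h1
        have h2 := aux_le_rpow hp
          (Finset.sum_nonneg fun k _ => Real.rpow_nonneg (abs_nonneg _) _)
          (fun h0 => by rw [Finset.card_eq_zero.mp h0, Finset.sum_empty]) h1
        have hcardTi : (hSifin i).toFinset.card = (Ti i).card := by rw [hTidef]
        have hsetTi : (hSifin i).toFinset = Ti i := by rw [hTidef]
        rw [hsetTi] at h2
        rw [hcardTi] at h2
        exact h2
      rw [hTScard]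
      calc ∑ k ∈ TS, |(f - glue Ωi hfun) (gridPt d δ k)| ^ p
          = ∑ i, ∑ k ∈ Ti i, |(f - glue Ωi hfun) (gridPt d δ k)| ^ p := hsum_part _
        _ = ∑ i, ∑ k ∈ Ti i, |(f - hfun i) (gridPt d δ k)| ^ p := by
            apply Finset.sum_congr rfl
            intro i _
            exact Finset.sum_congr rfl (hglue i)
        _ ≤ ∑ i, ((Ti i).card : ℝ) * (εf (σ i)) ^ p :=
            Finset.sum_le_sum fun i _ => hpience i
        _ = ∑ i, (((Ti i).card : ℝ) * (σ i : ℝ)) * (ε ^ p / 2) := by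
            apply Finset.sum_congr rfl
            intro i _
            rw [hεp (σ i), hmax i]
            ring
        _ = (∑ i, ((Ti i).card : ℝ) * (σ i : ℝ)) * (ε ^ p / 2) := by
            rw [Finset.sum_mul]
        _ ≤ (2 * (n:ℝ)) * (ε ^ p / 2) := by
            apply mul_le_mul_of_nonneg_right hσsum
            positivity
        _ = (n:ℝ) * ε ^ p := by ring
end
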